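/- Let $x$ be a positive even integer and $k$ a positive integer. If $k = 1$ or $k$ is even, then $v_2(T_k(x)) = v_2(x) - 1$; if $k \ge 3$ is odd, then $v_2(T_k(x)) = 2 v_2(x) - 2$. -/

import Mathlib

/-!
Write `x = 2 ^ v * u` with `u` odd and `v ≥ 1`. Modulo `2 ^ v` the interval `(x, 2x]` consists
of `u` complete residue systems, so `T k x ≡ u * ∑_{j < 2^v} j ^ k`; for `k = 1` or `k` even,
doubling the range shows `∑_{j < 2^v} j ^ k ≡ 2 ^ (v - 1) (mod 2 ^ v)`, giving
`v₂(T k x) = v - 1`. For odd `k ≥ 3`, pairing `i` with `3x - i` and expanding modulo `x ^ 2`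
gives `2 * T k x ≡ 3 * k * x * T (k - 1) x (mod 2 ^ (2v))`, and the right side has valuation
`v + (v - 1) < 2v`.
-/

/-- `T k x = (x+1)^k + (x+2)^k + ... + (2x)^k`. -/
def T (k x : ℕ) : ℕ := ∑ i ∈ Finset.Icc (x + 1) (2 * x), i ^ k

open Finset Function

lemma add_pow_of_sq_eq_zero {R : Type*} [CommSemiring R] {y : R} (x : R) (hy : y ^ 2 = 0)
    (k : ℕ) : (x + y) ^ k = x ^ k + k * x ^ (k - 1) * y := by
  simpa [Polynomial.derivative_X_pow] using
    Polynomial.eval_add_of_sq_eq_zero (Polynomial.X ^ k) x y hy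

lemma padicValNat_eq_of_modEq {p n a b : ℕ} [Fact p.Prime] (hb : b ≠ 0)
    (hlt : padicValNat p b < n) (h : a ≡ b [MOD p ^ n]) :
    padicValNat p a = padicValNat p b := by
  have hdvd : ∀ j ≤ n, p ^ j ∣ a ↔ p ^ j ∣ b := fun j hj ↦ h.dvd_iff (pow_dvd_pow p hj)
  have ha : a ≠ 0 := by
    rintro rfl
    have := (padicValNat_dvd_iff_le hb).mp ((hdvd n le_rfl).mp (dvd_zero _))
    omega
  refine le_antisymm ?_ ?_
  · by_contra! hgt
    have := (padicValNat_dvd_iff_le hb).mp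
      ((hdvd _ hlt).mp ((padicValNat_dvd_iff_le ha).mpr hgt))
    omega
  · exact (padicValNat_dvd_iff_le ha).mp ((hdvd _ hlt.le).mpr pow_padicValNat_dvd)

lemma padicValNat_two_pow_mul_odd {v u : ℕ} (hu : Odd u) : padicValNat 2 (2 ^ v * u) = v := by
  rw [padicValNat.mul (by positivity) (by rintro rfl; simp at hu), padicValNat.prime_pow,
    padicValNat.eq_zero_of_not_dvd hu.not_two_dvd_nat, add_zero]

lemma Function.Periodic.sum_Ico_eq_sum_range {M : Type*} [AddCommMonoid M] {f : ℕ → M}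
    {m : ℕ} (hf : Periodic f m) (a : ℕ) : ∑ i ∈ Ico a (a + m), f i = ∑ i ∈ range m, f i := by
  simp only [Finset.sum, Finset.range_val, ← Nat.multiset_Ico_map_mod a m, Multiset.map_map,
    comp_def, hf.map_mod_nat]
  rfl

lemma Function.Periodic.sum_Ico_add_mul_eq_nsmul {M : Type*} [AddCommMonoid M] {f : ℕ → M}
    {m : ℕ} (hf : Periodic f m) (a n : ℕ) :
    ∑ i ∈ Ico a (a + n * m), f i = n • ∑ i ∈ range m, f i := by
  induction n generalizing a with
  | zero => simp
  | succ n ih =>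
    rw [← sum_Ico_consecutive f (Nat.le_add_right a m) (by nlinarith), hf.sum_Ico_eq_sum_range,
      show a + (n + 1) * m = a + m + n * m by ring, ih, succ_nsmul']

lemma sum_range_two_pow_add_pow_modEq {k v : ℕ} (hk : k = 1 ∨ Even k) (hv : 0 < v) :
    ∑ j ∈ range (2 ^ v), (j + 2 ^ v) ^ k ≡ ∑ j ∈ range (2 ^ v), j ^ k [MOD 2 ^ (v + 1)] := by
  rw [← ZMod.natCast_eq_natCast_iff]
  have hmod : (2 : ZMod (2 ^ (v + 1))) ^ (v + 1) = 0 := by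
    exact_mod_cast ZMod.natCast_self (2 ^ (v + 1))
  have hy : ((2 : ZMod (2 ^ (v + 1))) ^ v) ^ 2 = 0 := by
    rw [← pow_mul, show v * 2 = (v + 1) + (v - 1) by omega, pow_add (2 : ZMod (2 ^ (v + 1))),
      hmod, zero_mul]
  -- The linear term vanishes: `k * 2 ^ v ≡ 0` for even `k`, and the sum is `2 ^ v` for `k = 1`.
  have hcorr :
      ∑ j ∈ range (2 ^ v), (k : ZMod (2 ^ (v + 1))) * (j : ZMod _) ^ (k - 1) * 2 ^ v = 0 := by
    rw [← sum_mul, ← mul_sum]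
    rcases hk with rfl | ⟨t, rfl⟩
    · simp [← sq, hy]
    · set S := ∑ j ∈ range (2 ^ v), (j : ZMod (2 ^ (v + 1))) ^ (t + t - 1)
      rw [show ((t + t : ℕ) : ZMod (2 ^ (v + 1))) * S * 2 ^ v = t * S * 2 ^ (v + 1) by
        push_cast; ring, hmod, mul_zero]
  push_cast
  simp_rw [add_pow_of_sq_eq_zero _ hy, sum_add_distrib, hcorr, add_zero]

lemma sum_range_two_pow_pow_modEq {k v : ℕ} (hk0 : 0 < k) (hk : k = 1 ∨ Even k) (hv : 0 < v) :
    ∑ j ∈ range (2 ^ v), j ^ k ≡ 2 ^ (v - 1) [MOD 2 ^ v] := by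
  induction v with
  | zero => omega
  | succ v ih =>
    rcases Nat.eq_zero_or_pos v with rfl | hv
    · simp [sum_range_succ, zero_pow hk0.ne', Nat.ModEq]
    have hdouble : 2 * ∑ j ∈ range (2 ^ v), j ^ k ≡ 2 ^ v [MOD 2 ^ (v + 1)] := by
      have := (ih hv).mul_left' 2
      rwa [← pow_succ', ← pow_succ', Nat.sub_add_cancel hv] at this
    calc ∑ j ∈ range (2 ^ (v + 1)), j ^ k
        = ∑ j ∈ range (2 ^ v), j ^ k + ∑ j ∈ range (2 ^ v), (2 ^ v + j) ^ k := by
          rw [pow_succ, mul_two, sum_range_add]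
      _ ≡ ∑ j ∈ range (2 ^ v), j ^ k + ∑ j ∈ range (2 ^ v), j ^ k [MOD 2 ^ (v + 1)] := by
          simp_rw [add_comm (2 ^ v)]
          exact Nat.ModEq.add_left _ (sum_range_two_pow_add_pow_modEq hk hv)
      _ = 2 * ∑ j ∈ range (2 ^ v), j ^ k := (two_mul _).symm
      _ ≡ 2 ^ (v + 1 - 1) [MOD 2 ^ (v + 1)] := hdouble

lemma T_eq_sum_Ico (k x : ℕ) : T k x = ∑ i ∈ Ico (x + 1) (x + 1 + x), i ^ k := by
  rw [T, ← Ico_add_one_right_eq_Icc, two_mul, add_right_comm]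

lemma T_two_pow_mul_modEq {k v u : ℕ} (hk0 : 0 < k) (hk : k = 1 ∨ Even k) (hv : 0 < v) :
    T k (2 ^ v * u) ≡ 2 ^ (v - 1) * u [MOD 2 ^ v] := by
  have hper : Periodic (fun i : ℕ ↦ (i : ZMod (2 ^ v)) ^ k) (2 ^ v) := fun i ↦ by
    simp only [Nat.cast_add, ZMod.natCast_self, add_zero]
  calc T k (2 ^ v * u) ≡ (∑ j ∈ range (2 ^ v), j ^ k) * u [MOD 2 ^ v] := by
        rw [← ZMod.natCast_eq_natCast_iff, T_eq_sum_Ico, mul_comm (2 ^ v) u]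
        push_cast
        rw [hper.sum_Ico_add_mul_eq_nsmul, nsmul_eq_mul, mul_comm]
    _ ≡ 2 ^ (v - 1) * u [MOD 2 ^ v] := (sum_range_two_pow_pow_modEq hk0 hk hv).mul_right u

lemma padicValNat_T_of_eq_one_or_even {k x : ℕ} (hx : 0 < x) (hxeven : Even x) (hk0 : 0 < k)
    (hk : k = 1 ∨ Even k) : padicValNat 2 (T k x) = padicValNat 2 x - 1 := by
  obtain ⟨v, u, hu, rfl⟩ := Nat.exists_eq_two_pow_mul_odd hx.ne'
  have hv : 0 < v := by
    by_contra! hv0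
    simp [Nat.le_zero.mp hv0, ← Nat.not_odd_iff_even, hu] at hxeven
  have hval : padicValNat 2 (2 ^ (v - 1) * u) = v - 1 := padicValNat_two_pow_mul_odd hu
  rw [padicValNat_eq_of_modEq (mul_ne_zero (by positivity) hu.pos.ne') (by omega)
    (T_two_pow_mul_modEq hk0 hk hv), hval, padicValNat_two_pow_mul_odd hu]

lemma T_pos (k : ℕ) {x : ℕ} (hx : 0 < x) : 0 < T k x :=
  sum_pos (fun i hi ↦ pow_pos (by simp only [mem_Icc] at hi; omega) k)
    ⟨2 * x, by simp only [mem_Icc]; omega⟩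

lemma two_mul_sum_Ico_pow_eq {R : Type*} [CommRing R] {k x : ℕ} (hk : Odd k)
    (hx : (x : R) ^ 2 = 0) :
    2 * ∑ i ∈ Ico (x + 1) (2 * x), (i : R) ^ k
      = 3 * k * x * ∑ i ∈ Ico (x + 1) (2 * x), (i : R) ^ (k - 1) := by
  have h3x : (3 * x : R) ^ 2 = 0 := by rw [mul_pow, hx, mul_zero]
  have hreflect : ∑ i ∈ Ico (x + 1) (2 * x), ((3 * x - i : ℕ) : R) ^ k
      = ∑ i ∈ Ico (x + 1) (2 * x), (i : R) ^ k := by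
    rw [sum_Ico_reflect (fun i ↦ (i : R) ^ k) _ (by omega)]
    congr 1
    ext i
    simp only [mem_Ico]
    omega
  have hpair : ∀ i ∈ Ico (x + 1) (2 * x),
      (i : R) ^ k + ((3 * x - i : ℕ) : R) ^ k = 3 * k * x * (i : R) ^ (k - 1) := by
    intro i hi
    rw [mem_Ico] at hi
    rw [Nat.cast_sub (by omega), sub_eq_neg_add, Nat.cast_mul, Nat.cast_ofNat,
      add_pow_of_sq_eq_zero _ h3x, hk.neg_pow, (Nat.Odd.sub_odd hk odd_one).neg_pow]
    ring
  calc 2 * ∑ i ∈ Ico (x + 1) (2 * x), (i : R) ^ k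
      = ∑ i ∈ Ico (x + 1) (2 * x), ((i : R) ^ k + ((3 * x - i : ℕ) : R) ^ k) := by
        rw [sum_add_distrib, hreflect, two_mul]
    _ = 3 * k * x * ∑ i ∈ Ico (x + 1) (2 * x), (i : R) ^ (k - 1) := by
        rw [sum_congr rfl hpair, mul_sum]

lemma T_cast_eq_sum_Ico {R : Type*} [CommSemiring R] {k x : ℕ} (hx : 0 < x) (hk : 2 ≤ k)
    (hx2 : (x : R) ^ 2 = 0) : (T k x : R) = ∑ i ∈ Ico (x + 1) (2 * x), (i : R) ^ k := by
  have htop : ((2 * x : ℕ) : R) ^ k = 0 := by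
    rw [Nat.cast_mul, mul_pow, ← Nat.sub_add_cancel hk, pow_add (x : R), hx2, mul_zero, mul_zero]
  rw [T, ← Ico_add_one_right_eq_Icc, sum_Ico_succ_top (by omega)]
  push_cast at htop ⊢
  rw [htop, add_zero]

lemma two_mul_T_modEq {k x n : ℕ} (hx : 0 < x) (hk : Odd k) (hk3 : 3 ≤ k) (hn : n ∣ x ^ 2) :
    2 * T k x ≡ 3 * k * x * T (k - 1) x [MOD n] := by
  have hx2 : (x : ZMod n) ^ 2 = 0 := by exact_mod_cast (ZMod.natCast_eq_zero_iff _ _).mpr hn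
  rw [← ZMod.natCast_eq_natCast_iff]
  push_cast
  rw [T_cast_eq_sum_Ico hx (by omega) hx2, T_cast_eq_sum_Ico hx (by omega) hx2,
    two_mul_sum_Ico_pow_eq hk hx2]

lemma padicValNat_T_of_odd {k x : ℕ} (hx : 0 < x) (hxeven : Even x) (hk3 : 3 ≤ k)
    (hk : Odd k) : padicValNat 2 (T k x) = 2 * padicValNat 2 x - 2 := by
  set v := padicValNat 2 x
  have hv : 0 < v := one_le_padicValNat_of_dvd hx.ne' hxeven.two_dvd
  have hTk1 : padicValNat 2 (T (k - 1) x) = v - 1 :=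
    padicValNat_T_of_eq_one_or_even hx hxeven (by omega) (Or.inr (Nat.Odd.sub_odd hk odd_one))
  have h3k : padicValNat 2 (3 * k) = 0 :=
    padicValNat.eq_zero_of_not_dvd ((by decide : Odd 3).mul hk).not_two_dvd_nat
  have hcoeff : 3 * k * x ≠ 0 := mul_ne_zero (by omega) hx.ne'
  have hrhs : padicValNat 2 (3 * k * x * T (k - 1) x) = 2 * v - 1 := by
    rw [padicValNat.mul hcoeff (T_pos _ hx).ne', padicValNat.mul (by omega) hx.ne',
      h3k, hTk1]
    omega
  have hcong : 2 * T k x ≡ 3 * k * x * T (k - 1) x [MOD 2 ^ (2 * v)] :=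
    two_mul_T_modEq hx hk hk3
      (by rw [mul_comm, pow_mul]; exact pow_dvd_pow_of_dvd pow_padicValNat_dvd 2)
  have h2T := padicValNat_eq_of_modEq (mul_ne_zero hcoeff (T_pos _ hx).ne') (by omega) hcong
  rw [padicValNat.mul two_ne_zero (T_pos _ hx).ne', padicValNat_self, hrhs] at h2T
  omega

theorem stmt_16 (x k : ℕ) (hx : 0 < x) (hxeven : Even x) (hk : 0 < k) :
    ((k = 1 ∨ Even k) → padicValNat 2 (T k x) = padicValNat 2 x - 1) ∧
    (3 ≤ k → Odd k → padicValNat 2 (T k x) = 2 * padicValNat 2 x - 2) :=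
  ⟨padicValNat_T_of_eq_one_or_even hx hxeven hk, padicValNat_T_of_odd hx hxeven⟩
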